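/- arXiv:1804.07900 — 2 statements merged into one kernel-verified Lean document; each statement's English description precedes it below -/
import Mathlib

section
/- Let f be a C² Morse function on an open set Ω ⊆ ℝ^{n+1} (n ≥ 2). Define, at each regular point p, the mean curvature H(p) = (|∇f|² Tr Q − Q(∇f)) / (n |∇f|³), where Q is the Hessian quadratic form of f at p. Then H is Lebesgue-integrable on every compact subset of Ω. -/
open MeasureTheory Set
open Metric
noncomputable section

/-- The Hessian matrix of `f` at `x`, as a matrix of second partial derivatives. -/
def hessMat {n : ℕ} (f : EuclideanSpace ℝ (Fin (n + 1)) → ℝ)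
    (x : EuclideanSpace ℝ (Fin (n + 1))) : Matrix (Fin (n + 1)) (Fin (n + 1)) ℝ :=
  Matrix.of fun i j =>
    iteratedFDeriv ℝ 2 f x ![EuclideanSpace.single i 1, EuclideanSpace.single j 1]

/-- The Hessian quadratic form `Q(v) = vᵀ (Hess f) v` of `f` at `x`. -/
def hessQ {n : ℕ} (f : EuclideanSpace ℝ (Fin (n + 1)) → ℝ)
    (x v : EuclideanSpace ℝ (Fin (n + 1))) : ℝ :=
  dotProduct (fun i => v i) ((hessMat f x).mulVec fun i => v i)

/-- The quadratic form `Q*(v) = vᵀ adj(Hess f) v` of the adjugate of the Hessian. -/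
def hessQstar {n : ℕ} (f : EuclideanSpace ℝ (Fin (n + 1)) → ℝ)
    (x v : EuclideanSpace ℝ (Fin (n + 1))) : ℝ :=
  dotProduct (fun i => v i) ((hessMat f x).adjugate.mulVec fun i => v i)

/-- Mean curvature of the level hypersurface of `f` through `x`
(w.r.t. the unit normal `N = -∇f/|∇f|`). -/
def meanCurv {n : ℕ} (f : EuclideanSpace ℝ (Fin (n + 1)) → ℝ)
    (x : EuclideanSpace ℝ (Fin (n + 1))) : ℝ :=
  (‖gradient f x‖ ^ 2 * (hessMat f x).trace - hessQ f x (gradient f x)) /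
    (n * ‖gradient f x‖ ^ 3)

/-- Gauss–Kronecker curvature of the level hypersurface of `f` through `x`
(w.r.t. the unit normal `N = -∇f/|∇f|`). -/
def gaussCurv {n : ℕ} (f : EuclideanSpace ℝ (Fin (n + 1)) → ℝ)
    (x : EuclideanSpace ℝ (Fin (n + 1))) : ℝ :=
  hessQstar f x (gradient f x) / ‖gradient f x‖ ^ (n + 2)

/-- `f` is a Morse function on `Ω`: every critical point in `Ω` is nondegenerate. -/
def IsMorseOn {n : ℕ} (f : EuclideanSpace ℝ (Fin (n + 1)) → ℝ)
    (Ω : Set (EuclideanSpace ℝ (Fin (n + 1)))) : Prop :=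
  ∀ x ∈ Ω, gradient f x = 0 → (hessMat f x).det ≠ 0

/-- `ν t` : the n-dimensional volume (Hausdorff measure) of the level set `f⁻¹(t)` in `Ω`. -/
def levelVol {n : ℕ} (f : EuclideanSpace ℝ (Fin (n + 1)) → ℝ)
    (Ω : Set (EuclideanSpace ℝ (Fin (n + 1)))) (t : ℝ) : ℝ :=
  (μH[(n : ℝ)] (Ω ∩ f ⁻¹' {t})).toReal

namespace MeanCurvProof

variable {n : ℕ}

lemma coord_abs_le_norm (v : EuclideanSpace ℝ (Fin (n+1))) (i : Fin (n+1)) : |v i| ≤ ‖v‖ := by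
  have h := abs_real_inner_le_norm v (EuclideanSpace.single i (1:ℝ))
  rw [EuclideanSpace.inner_single_right, EuclideanSpace.norm_single] at h
  simpa using h

lemma hessMat_apply' (f : EuclideanSpace ℝ (Fin (n + 1)) → ℝ) (x : EuclideanSpace ℝ (Fin (n + 1)))
    (i j : Fin (n+1)) :
    hessMat f x i j =
      fderiv ℝ (fderiv ℝ f) x (EuclideanSpace.single i 1) (EuclideanSpace.single j 1) := by
  show iteratedFDeriv ℝ 2 f x ![_, _] = _
  rw [iteratedFDeriv_two_apply]; rfl

lemma euclidean_decomp (v : EuclideanSpace ℝ (Fin (n+1))) :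
    v = ∑ j, v j • EuclideanSpace.single j (1:ℝ) := by
  ext i
  rw [show ((∑ j, v j • EuclideanSpace.single j (1:ℝ)) i)
      = ∑ j, (v j • EuclideanSpace.single j (1:ℝ)) i from by rw [WithLp.ofLp_sum, Finset.sum_apply]]
  simp [EuclideanSpace.single_apply]

lemma norm_gradient_eq (f : EuclideanSpace ℝ (Fin (n+1)) → ℝ) (x : EuclideanSpace ℝ (Fin (n+1))) :
    ‖gradient f x‖ = ‖fderiv ℝ f x‖ :=
  LinearIsometryEquiv.norm_map _ _

lemma grad_lower_bound {Ω : Set (EuclideanSpace ℝ (Fin (n+1)))} (hΩ : IsOpen Ω)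
    {f : EuclideanSpace ℝ (Fin (n+1)) → ℝ} (hf : ContDiffOn ℝ 2 f Ω)
    {x₀ : EuclideanSpace ℝ (Fin (n+1))} (hx₀ : x₀ ∈ Ω) (h0 : gradient f x₀ = 0)
    (hdet : (hessMat f x₀).det ≠ 0) :
    ∃ c > (0:ℝ), ∀ᶠ x in nhds x₀, c * ‖x - x₀‖ ≤ ‖gradient f x‖ := by
  have hf2 : ContDiffAt ℝ 2 f x₀ := hf.contDiffAt (hΩ.mem_nhds hx₀)
  have h1 : ContDiffAt ℝ 1 (fderiv ℝ f) x₀ := hf2.fderiv_right (le_refl _)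
  have hd : DifferentiableAt ℝ (fderiv ℝ f) x₀ := h1.differentiableAt one_ne_zero
  set A := fderiv ℝ (fderiv ℝ f) x₀ with hA
  have hf0 : fderiv ℝ f x₀ = 0 := by
    have : (InnerProductSpace.toDual ℝ (EuclideanSpace ℝ (Fin (n+1)))).symm (fderiv ℝ f x₀) = 0 := h0
    simpa using this
  have hAinj : Function.Injective A := by
    refine (injective_iff_map_eq_zero A).mpr ?_
    intro v hv
    have hcoord : ∀ i, Matrix.vecMul (fun j => v j) (hessMat f x₀) i = 0 := by
      intro i
      have hv' : A v (EuclideanSpace.single i 1) = 0 := by rw [hv]; rfl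
      conv_lhs at hv' => rw [euclidean_decomp v]
      simp only [map_sum] at hv'
      rw [ContinuousLinearMap.sum_apply] at hv'
      have hterm : ∀ j, (A (v j • EuclideanSpace.single j 1)) (EuclideanSpace.single i 1)
          = v j * hessMat f x₀ j i := by
        intro j
        rw [A.map_smul, ContinuousLinearMap.smul_apply, smul_eq_mul, hessMat_apply']
      rw [Finset.sum_congr rfl fun j _ => hterm j] at hv'
      simpa [Matrix.vecMul, dotProduct, mul_comm] using hv'
    have hUnit : IsUnit (hessMat f x₀).det := isUnit_iff_ne_zero.mpr hdet
    have hveq : Matrix.vecMul (fun j => v j) (hessMat f x₀) = 0 := funext hcoord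
    have hz : (fun j => v j) = 0 := by
      have h2 := congrArg (fun w => Matrix.vecMul w (hessMat f x₀)⁻¹) hveq
      simpa [Matrix.vecMul_vecMul, Matrix.mul_nonsing_inv _ hUnit] using h2
    ext i
    exact congrFun hz i
  obtain ⟨K, hK, hAanti⟩ := (LinearMap.injective_iff_antilipschitz A.toLinearMap).mp hAinj
  set c : ℝ := 1 / (2 * K) with hc
  have hcpos : 0 < c := by positivity
  refine ⟨c, hcpos, ?_⟩
  have hlo := (hd.hasFDerivAt.isLittleO).def hcpos
  filter_upwards [hlo] with x hx
  rw [norm_gradient_eq]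
  have hlow : (2 * c) * ‖x - x₀‖ ≤ ‖A (x - x₀)‖ := by
    have h' := hAanti.le_mul_dist x x₀
    rw [dist_eq_norm, dist_eq_norm, ← map_sub] at h'
    have h'' : ‖x - x₀‖ ≤ (K:ℝ) * ‖A (x - x₀)‖ := h'
    have hKc : (2 * c) * (K : ℝ) = 1 := by
      have : (K:ℝ) ≠ 0 := ne_of_gt hK
      rw [hc]; field_simp
    calc (2*c) * ‖x - x₀‖ ≤ (2*c) * ((K:ℝ) * ‖A (x - x₀)‖) :=
          mul_le_mul_of_nonneg_left h'' (by positivity)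
      _ = ‖A (x - x₀)‖ := by rw [← mul_assoc, hKc, one_mul]
  rw [hf0, sub_zero] at hx
  calc c * ‖x - x₀‖ = (2*c) * ‖x - x₀‖ - c * ‖x - x₀‖ := by ring
    _ ≤ ‖A (x - x₀)‖ - ‖fderiv ℝ f x - A (x - x₀)‖ := sub_le_sub hlow hx
    _ ≤ ‖fderiv ℝ f x‖ := by
        linarith [norm_sub_norm_le (A (x-x₀)) (fderiv ℝ f x),
          norm_sub_rev (A (x-x₀)) (fderiv ℝ f x)]

lemma integrableOn_inv_norm_sub (hn : 1 ≤ n) (x₀ : EuclideanSpace ℝ (Fin (n+1))) {r : ℝ}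
    (hr : 0 < r) :
    IntegrableOn (fun x : EuclideanSpace ℝ (Fin (n+1)) => ‖x - x₀‖⁻¹) (closedBall x₀ r) volume := by
  have hfin : Module.finrank ℝ (EuclideanSpace ℝ (Fin (n+1))) = n+1 := finrank_euclideanSpace_fin
  set g : EuclideanSpace ℝ (Fin (n+1)) → ℝ := fun x => ‖x - x₀‖⁻¹ with hg
  have hgm : Measurable g := (measurable_id.sub_const x₀).norm.inv
  refine ⟨(hgm.aestronglyMeasurable).restrict, ?_⟩
  rw [hasFiniteIntegral_iff_norm]
  have hnn : ∀ x, 0 ≤ g x := fun x => inv_nonneg.2 (norm_nonneg _)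
  have key : ∫⁻ x in closedBall x₀ r, ENNReal.ofReal ‖g x‖ =
      ∫⁻ t in Ioi (0:ℝ), volume.restrict (closedBall x₀ r) {a | t < g a} := by
    have := lintegral_eq_lintegral_meas_lt (volume.restrict (closedBall x₀ r))
      (Filter.Eventually.of_forall hnn) hgm.aemeasurable
    simpa [Real.norm_of_nonneg (hnn _)] using this
  rw [key]
  have hsplit : (Ioi (0:ℝ)) = Ioc 0 r⁻¹ ∪ Ioi r⁻¹ := (Ioc_union_Ioi_eq_Ioi (by positivity)).symm
  rw [hsplit, lintegral_union measurableSet_Ioi Ioc_disjoint_Ioi_same]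
  have hVB : volume (closedBall x₀ r) < ⊤ := (isCompact_closedBall x₀ r).measure_lt_top
  have h1 : ∫⁻ t in Ioc (0:ℝ) r⁻¹, volume.restrict (closedBall x₀ r) {a | t < g a} ≤
      volume (closedBall x₀ r) * ENNReal.ofReal r⁻¹ := by
    refine le_trans (setLIntegral_mono' measurableSet_Ioc
      (fun t _ => le_trans (measure_mono (subset_univ _))
        (le_of_eq (Measure.restrict_apply_univ _)))) ?_
    rw [setLIntegral_const, Real.volume_Ioc]
    norm_num
  have h2 : ∫⁻ t in Ioi r⁻¹, volume.restrict (closedBall x₀ r) {a | t < g a} < ⊤ := by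
    have hb : ∀ t ∈ Ioi r⁻¹, volume.restrict (closedBall x₀ r) {a | t < g a} ≤
        ENNReal.ofReal (t ^ (-((n+1:ℕ):ℝ))) * volume (ball (0:EuclideanSpace ℝ (Fin (n+1))) 1) := by
      intro t ht
      have ht0 : 0 < t := lt_trans (by positivity) ht
      have hsub : {a : EuclideanSpace ℝ (Fin (n+1)) | t < g a} ⊆ ball x₀ t⁻¹ := by
        intro a ha
        simp only [mem_setOf_eq, hg] at ha
        have hna : 0 < ‖a - x₀‖ := by
          by_contra h
          push_neg at h
          have : ‖a - x₀‖ = 0 := le_antisymm h (norm_nonneg _)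
          rw [this] at ha; simp at ha; linarith
        have : ‖a - x₀‖ < t⁻¹ := by
          rw [lt_inv_comm₀ ht0 hna] at ha; exact ha
        simpa [mem_ball, dist_eq_norm] using this
      have hpow : t⁻¹ ^ (n+1) = t ^ (-((n+1:ℕ):ℝ)) := by
        rw [← Real.rpow_natCast t⁻¹ (n+1), Real.inv_rpow ht0.le, ← Real.rpow_neg ht0.le]
      calc volume.restrict (closedBall x₀ r) {a | t < g a}
          ≤ volume {a : EuclideanSpace ℝ (Fin (n+1)) | t < g a} := Measure.restrict_le_self _
        _ ≤ volume (ball x₀ t⁻¹) := measure_mono hsub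
        _ = ENNReal.ofReal (t⁻¹ ^ (n+1)) * volume (ball (0:EuclideanSpace ℝ (Fin (n+1))) 1) := by
            rw [Measure.addHaar_ball volume x₀ (by positivity), hfin]
        _ = _ := by rw [hpow]
    have hint : IntegrableOn (fun t : ℝ => t ^ (-((n+1:ℕ):ℝ))) (Ioi r⁻¹) :=
      integrableOn_Ioi_rpow_of_lt (by
        have : (1:ℝ) < ((n+1:ℕ):ℝ) := by exact_mod_cast (by omega : 1 < n+1)
        linarith) (by positivity)
    have hfin2 : ∫⁻ t in Ioi r⁻¹, ENNReal.ofReal (t ^ (-((n+1:ℕ):ℝ))) < ⊤ := by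
      have h' := hint.2
      rw [hasFiniteIntegral_iff_norm] at h'
      refine lt_of_le_of_lt (setLIntegral_mono' measurableSet_Ioi fun t _ => ?_) h'
      exact ENNReal.ofReal_le_ofReal (le_abs_self _)
    calc ∫⁻ t in Ioi r⁻¹, volume.restrict (closedBall x₀ r) {a | t < g a}
        ≤ ∫⁻ t in Ioi r⁻¹, ENNReal.ofReal (t ^ (-((n+1:ℕ):ℝ))) *
            volume (ball (0:EuclideanSpace ℝ (Fin (n+1))) 1) :=
          setLIntegral_mono' measurableSet_Ioi hb
      _ = (∫⁻ t in Ioi r⁻¹, ENNReal.ofReal (t ^ (-((n+1:ℕ):ℝ)))) *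
            volume (ball (0:EuclideanSpace ℝ (Fin (n+1))) 1) := lintegral_mul_const _
              (ENNReal.measurable_ofReal.comp (Measurable.pow_const measurable_id _))
      _ < ⊤ := ENNReal.mul_lt_top hfin2 measure_ball_lt_top
  exact lt_of_le_of_lt (add_le_add h1 (le_refl _)) (ENNReal.add_lt_top.2
    ⟨ENNReal.mul_lt_top hVB ENNReal.ofReal_lt_top, h2⟩)

variable {Ω : Set (EuclideanSpace ℝ (Fin (n+1)))} {f : EuclideanSpace ℝ (Fin (n+1)) → ℝ}

lemma continuousOn_gradient' (hΩ : IsOpen Ω) (hf : ContDiffOn ℝ 2 f Ω) :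
    ContinuousOn (gradient f) Ω := by
  have h := hf.continuousOn_fderiv_of_isOpen hΩ one_le_two
  exact (InnerProductSpace.toDual ℝ
    (EuclideanSpace ℝ (Fin (n+1)))).symm.continuous.comp_continuousOn h

lemma continuousOn_hessEntry (hΩ : IsOpen Ω) (hf : ContDiffOn ℝ 2 f Ω) (i j : Fin (n+1)) :
    ContinuousOn (fun x => hessMat f x i j) Ω := by
  have h := hf.continuousOn_iteratedFDerivWithin (m := 2) (by norm_num) hΩ.uniqueDiffOn
  have h2 : ContinuousOn (iteratedFDeriv ℝ 2 f) Ω :=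
    h.congr fun x hx => (iteratedFDerivWithin_of_isOpen 2 hΩ hx).symm
  exact (ContinuousMultilinearMap.apply ℝ (fun _ : Fin 2 => EuclideanSpace ℝ (Fin (n+1))) ℝ
    ![EuclideanSpace.single i 1, EuclideanSpace.single j 1]).continuous.comp_continuousOn h2

lemma continuousOn_gradCoord (hΩ : IsOpen Ω) (hf : ContDiffOn ℝ 2 f Ω) (i : Fin (n+1)) :
    ContinuousOn (fun x => gradient f x i) Ω :=
  (EuclideanSpace.proj i).continuous.comp_continuousOn (continuousOn_gradient' hΩ hf)

lemma continuousOn_num (hΩ : IsOpen Ω) (hf : ContDiffOn ℝ 2 f Ω) :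
    ContinuousOn (fun x => ‖gradient f x‖ ^ 2 * (hessMat f x).trace
      - hessQ f x (gradient f x)) Ω := by
  have hg := continuousOn_gradient' hΩ hf
  have htr : ContinuousOn (fun x => (hessMat f x).trace) Ω := by
    exact (continuousOn_finset_sum Finset.univ fun i _ =>
      continuousOn_hessEntry hΩ hf i i).congr fun x _ => rfl
  have hq : ContinuousOn (fun x => hessQ f x (gradient f x)) Ω := by
    have hq' : ContinuousOn (fun x => ∑ i, (gradient f x i)
        * ∑ j, hessMat f x i j * (gradient f x j)) Ω :=
      continuousOn_finset_sum _ fun i _ => ContinuousOn.mul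
        (continuousOn_gradCoord hΩ hf i) (continuousOn_finset_sum _ fun j _ =>
          ContinuousOn.mul (continuousOn_hessEntry hΩ hf i j) (continuousOn_gradCoord hΩ hf j))
    exact hq'.congr fun x _ => rfl
  exact ((hg.norm.pow 2).mul htr).sub hq

lemma continuousOn_den (hΩ : IsOpen Ω) (hf : ContDiffOn ℝ 2 f Ω) :
    ContinuousOn (fun x => (n:ℝ) * ‖gradient f x‖ ^ 3) Ω :=
  continuousOn_const.mul ((continuousOn_gradient' hΩ hf).norm.pow 3)

lemma continuousOn_hessSum (hΩ : IsOpen Ω) (hf : ContDiffOn ℝ 2 f Ω) :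
    ContinuousOn (fun x => ∑ i, ∑ j, |hessMat f x i j|) Ω :=
  continuousOn_finset_sum _ fun i _ => continuousOn_finset_sum _ fun j _ =>
    (continuousOn_hessEntry hΩ hf i j).abs

lemma meanCurv_abs_le (f : EuclideanSpace ℝ (Fin (n+1)) → ℝ)
    (x : EuclideanSpace ℝ (Fin (n+1))) {C : ℝ}
    (hC : ∑ i, ∑ j, |hessMat f x i j| ≤ C) :
    |meanCurv f x| ≤ (2*C) / ((n:ℝ) * ‖gradient f x‖) := by
  set g := gradient f x with hgdef
  set H := hessMat f x with hHdef
  have hC0 : 0 ≤ C := le_trans (Finset.sum_nonneg fun i _ =>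
    Finset.sum_nonneg fun j _ => abs_nonneg _) hC
  rcases eq_or_ne g 0 with hg | hg
  · have hq0 : hessQ f x (0 : EuclideanSpace ℝ (Fin (n+1))) = 0 := by
      simp [hessQ, dotProduct]
    rw [meanCurv, ← hgdef, ← hHdef, hg, hq0]
    rw [norm_zero]
    norm_num
  · have hgn : 0 < ‖g‖ := norm_pos_iff.mpr hg
    have htr : |H.trace| ≤ C := by
      refine le_trans ?_ hC
      refine le_trans (Finset.abs_sum_le_sum_abs _ _) ?_
      refine Finset.sum_le_sum fun i _ => ?_
      exact Finset.single_le_sum (f := fun j => |H i j|)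
        (fun j _ => abs_nonneg _) (Finset.mem_univ i)
    have hqb : |hessQ f x g| ≤ C * ‖g‖^2 := by
      have : hessQ f x g = ∑ i, (g i) * ∑ j, H i j * (g j) := rfl
      rw [this]
      refine le_trans (Finset.abs_sum_le_sum_abs _ _) ?_
      have step : ∀ i, |(g i) * ∑ j, H i j * (g j)| ≤ (∑ j, |H i j|) * ‖g‖^2 := by
        intro i
        rw [abs_mul]
        calc |g i| * |∑ j, H i j * (g j)| ≤ ‖g‖ * ∑ j, |H i j| * ‖g‖ := by
              refine mul_le_mul (coord_abs_le_norm g i) (le_trans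
                (Finset.abs_sum_le_sum_abs _ _) (Finset.sum_le_sum fun j _ => ?_))
                (abs_nonneg _) (norm_nonneg _)
              rw [abs_mul]
              exact mul_le_mul_of_nonneg_left (coord_abs_le_norm g j) (abs_nonneg _)
          _ = (∑ j, |H i j|) * ‖g‖^2 := by rw [← Finset.sum_mul]; ring
      refine le_trans (Finset.sum_le_sum fun i _ => step i) ?_
      rw [← Finset.sum_mul]
      exact mul_le_mul_of_nonneg_right hC (by positivity)
    have hnum : |‖g‖^2 * H.trace - hessQ f x g| ≤ 2 * C * ‖g‖^2 := by
      refine le_trans (abs_sub _ _) ?_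
      rw [abs_mul]
      have h1 : |‖g‖^2| * |H.trace| ≤ ‖g‖^2 * C := by
        rw [abs_of_nonneg (by positivity : (0:ℝ) ≤ ‖g‖^2)]
        exact mul_le_mul_of_nonneg_left htr (by positivity)
      nlinarith [hqb]
    rw [meanCurv, ← hgdef, ← hHdef]
    rcases Nat.eq_zero_or_pos n with hn0 | hn0
    · subst hn0
      norm_num
    have hden : (0:ℝ) < (n:ℝ) * ‖g‖^3 := by positivity
    rw [abs_div, abs_of_pos hden]
    rw [div_le_div_iff₀ hden (by positivity : (0:ℝ) < (n:ℝ) * ‖g‖)]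
    calc |‖g‖^2 * H.trace - hessQ f x g| * ((n:ℝ) * ‖g‖)
        ≤ (2 * C * ‖g‖^2) * ((n:ℝ) * ‖g‖) :=
          mul_le_mul_of_nonneg_right hnum (by positivity)
      _ = 2*C * ((n:ℝ) * ‖g‖^3) := by ring

end MeanCurvProof


/-- The mean curvature of level hypersurfaces of a Morse function is locally integrable:
it is Lebesgue-integrable on every compact subset of `Ω`. -/
theorem meanCurv_integrableOn_compact {n : ℕ} (hn : 2 ≤ n)
    (Ω : Set (EuclideanSpace ℝ (Fin (n + 1)))) (hΩ : IsOpen Ω)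
    (f : EuclideanSpace ℝ (Fin (n + 1)) → ℝ) (hf : ContDiffOn ℝ 2 f Ω)
    (hMorse : IsMorseOn f Ω)
    (K : Set (EuclideanSpace ℝ (Fin (n + 1)))) (hK : K ⊆ Ω) (hKc : IsCompact K) :
    IntegrableOn (meanCurv f) K volume := by
  classical
  have hloc : MeasureTheory.LocallyIntegrableOn (meanCurv f) K volume := by
    intro x₀ hx₀
    have hx₀Ω : x₀ ∈ Ω := hK hx₀
    -- find a closed ball on which meanCurv is integrable
    have hball : ∃ r > 0, IntegrableOn (meanCurv f) (closedBall x₀ r) volume := by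
      rcases eq_or_ne (gradient f x₀) 0 with h0 | h0
      · -- critical point
        have hdet := hMorse x₀ hx₀Ω h0
        obtain ⟨c, hc, hev⟩ := MeanCurvProof.grad_lower_bound hΩ hf hx₀Ω h0 hdet
        obtain ⟨r₁, hr₁, hr₁sub⟩ := Metric.nhds_basis_closedBall.mem_iff.mp (hΩ.mem_nhds hx₀Ω)
        obtain ⟨r₂, hr₂, hr₂P⟩ := Metric.eventually_nhds_iff_ball.mp hev
        set r : ℝ := min r₁ (r₂/2) with hrdef
        have hrpos : 0 < r := lt_min hr₁ (by positivity)
        have hBΩ : closedBall x₀ r ⊆ Ω := le_trans (closedBall_subset_closedBall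
          (min_le_left _ _)) hr₁sub
        have hBP : ∀ x ∈ closedBall x₀ r, c * ‖x - x₀‖ ≤ ‖gradient f x‖ := by
          intro x hx
          apply hr₂P
          rw [mem_ball, dist_comm]
          calc dist x₀ x ≤ r := by rwa [dist_comm, ← Metric.mem_closedBall]
            _ ≤ r₂/2 := min_le_right _ _
            _ < r₂ := by linarith
        -- bound on hessSum
        obtain ⟨C, hCb⟩ := (isCompact_closedBall x₀ r).exists_bound_of_continuousOn
          ((MeanCurvProof.continuousOn_hessSum hΩ hf).mono hBΩ)
        have hC0 : 0 ≤ C := by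
          have := hCb x₀ (mem_closedBall_self hrpos.le)
          exact le_trans (norm_nonneg _) this
        -- the majorant
        set M : ℝ := (2*C) / ((n:ℝ) * c) with hMdef
        have hM0 : 0 ≤ M := by positivity
        have hmaj : IntegrableOn (fun x : EuclideanSpace ℝ (Fin (n+1)) =>
            M * ‖x - x₀‖⁻¹) (closedBall x₀ r) volume :=
          (MeanCurvProof.integrableOn_inv_norm_sub (by omega) x₀ hrpos).const_mul M
        -- measurability
        have hBmeas : MeasurableSet (closedBall x₀ r) := measurableSet_closedBall
        have hnum_m : AEMeasurable (fun x => ‖gradient f x‖ ^ 2 * (hessMat f x).trace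
            - hessQ f x (gradient f x)) (volume.restrict (closedBall x₀ r)) :=
          ((MeanCurvProof.continuousOn_num hΩ hf).mono hBΩ).aemeasurable hBmeas
        have hden_m : AEMeasurable (fun x => (n:ℝ) * ‖gradient f x‖ ^ 3)
            (volume.restrict (closedBall x₀ r)) :=
          ((MeanCurvProof.continuousOn_den hΩ hf).mono hBΩ).aemeasurable hBmeas
        have hmc_m : AEStronglyMeasurable (meanCurv f) (volume.restrict (closedBall x₀ r)) :=
          (hnum_m.div hden_m).aestronglyMeasurable
        refine ⟨r, hrpos, ?_⟩
        refine Integrable.mono' hmaj hmc_m ?_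
        rw [MeasureTheory.ae_restrict_iff' hBmeas]
        refine Filter.Eventually.of_forall fun x hx => ?_
        have hCx : ∑ i, ∑ j, |hessMat f x i j| ≤ C := by
          have := hCb x hx
          exact le_trans (le_abs_self _) this
        have hb1 : |meanCurv f x| ≤ (2*C) / ((n:ℝ) * ‖gradient f x‖) :=
          MeanCurvProof.meanCurv_abs_le f x hCx
        rw [Real.norm_eq_abs]
        refine le_trans hb1 ?_
        rcases eq_or_ne x x₀ with rfl | hxne
        · rw [h0]
          simp [hM0]
        · have hxx : 0 < ‖x - x₀‖ := by
            rw [norm_pos_iff, sub_ne_zero]; exact hxne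
          have hglow : c * ‖x - x₀‖ ≤ ‖gradient f x‖ := hBP x hx
          have hn0 : (0:ℝ) < n := by exact_mod_cast (by omega : 0 < n)
          have hd1 : (0:ℝ) < (n:ℝ) * (c * ‖x - x₀‖) := by positivity
          calc (2*C) / ((n:ℝ) * ‖gradient f x‖) ≤ (2*C) / ((n:ℝ) * (c * ‖x - x₀‖)) := by
                apply div_le_div_of_nonneg_left (by positivity) hd1
                exact mul_le_mul_of_nonneg_left hglow (by positivity)
            _ = M * ‖x - x₀‖⁻¹ := by
                rw [hMdef]
                field_simp [ne_of_gt hxx, ne_of_gt hc, ne_of_gt hn0]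
      · -- regular point: meanCurv is continuous near x₀
        have hV : IsOpen {x | x ∈ Ω ∧ gradient f x ≠ 0} := by
          have : {x | x ∈ Ω ∧ gradient f x ≠ 0} = Ω ∩ (gradient f) ⁻¹' ({0}ᶜ) := rfl
          rw [this]
          exact (MeanCurvProof.continuousOn_gradient' hΩ hf).isOpen_inter_preimage hΩ
            isOpen_compl_singleton
        obtain ⟨r, hrpos, hrsub⟩ := Metric.nhds_basis_closedBall.mem_iff.mp
          (hV.mem_nhds ⟨hx₀Ω, h0⟩)
        refine ⟨r, hrpos, ?_⟩
        have hBΩ : closedBall x₀ r ⊆ Ω := fun x hx => (hrsub hx).1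
        have hcont : ContinuousOn (meanCurv f) (closedBall x₀ r) := by
          refine ContinuousOn.congr ?_ (fun x (_ : x ∈ closedBall x₀ r) =>
            (rfl : meanCurv f x = (‖gradient f x‖ ^ 2 * (hessMat f x).trace
              - hessQ f x (gradient f x)) / ((n:ℝ) * ‖gradient f x‖ ^ 3)))
          refine ContinuousOn.div (((MeanCurvProof.continuousOn_num hΩ hf).mono hBΩ))
            (((MeanCurvProof.continuousOn_den hΩ hf).mono hBΩ)) ?_
          intro x hx
          have hg0 : gradient f x ≠ 0 := (hrsub hx).2
          have : 0 < ‖gradient f x‖ := norm_pos_iff.mpr hg0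
          have hnn : (0:ℝ) < n := by exact_mod_cast (by omega : 0 < n)
          positivity
        exact hcont.integrableOn_compact (isCompact_closedBall x₀ r)
    obtain ⟨r, hrpos, hint⟩ := hball
    exact ⟨closedBall x₀ r, nhdsWithin_le_nhds (Metric.closedBall_mem_nhds x₀ hrpos), hint⟩
  exact hloc.integrableOn_isCompact hKc
end
end

section
/- Let f be a C² Morse function on an open set Ω ⊆ ℝ^{n+1} (n ≥ 2). Define, at each regular point p, the Gaussian curvature K(p) = Q*(∇f) / |∇f|^{n+2}, where Q* is the quadratic form whose matrix is the adjugate of the Hessian matrix of f at p. Then the function K·|∇f| (extended arbitrarily at critical points) is Lebesgue-integrable on every compact subset of Ω. -/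
open MeasureTheory Set
noncomputable section

section Auxiliary

open Metric Real Filter Topology Asymptotics Matrix

/-- On a finite-dimensional normed space, `x ↦ ‖x - p‖ ^ (-s)` is integrable on balls
provided `0 < s < dim`. -/
lemma integrableOn_rpow_dist_ball {E : Type*} [NormedAddCommGroup E] [NormedSpace ℝ E]
    [MeasurableSpace E] [BorelSpace E] [FiniteDimensional ℝ E]
    (μ : Measure E) [μ.IsAddHaarMeasure] {s : ℝ} (hs : 0 < s)
    (hsd : s < Module.finrank ℝ E) (p : E) (R : ℝ) :
    IntegrableOn (fun x => ‖x - p‖ ^ (-s)) (ball p R) μ := by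
  have hm : Measurable fun x : E => ‖x - p‖ ^ (-s) := by fun_prop
  have hnn : ∀ x : E, 0 ≤ ‖x - p‖ ^ (-s) := fun x => rpow_nonneg (norm_nonneg _) _
  refine ⟨(hm.aestronglyMeasurable).restrict, ?_⟩
  rw [hasFiniteIntegral_iff_ofReal (ae_of_all _ hnn)]
  rw [lintegral_eq_lintegral_meas_le _ (ae_of_all _ hnn) hm.aemeasurable.restrict]
  have hd : (0:ℝ) < Module.finrank ℝ E := lt_trans hs hsd
  calc ∫⁻ t in Ioi (0:ℝ), (μ.restrict (ball p R)) {a | t ≤ ‖a - p‖ ^ (-s)}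
      ≤ ∫⁻ t in Ioc (0:ℝ) 1 ∪ Ioi 1, (μ.restrict (ball p R)) {a | t ≤ ‖a - p‖ ^ (-s)} :=
        lintegral_mono_set Ioi_subset_Ioc_union_Ioi
    _ ≤ (∫⁻ t in Ioc (0:ℝ) 1, (μ.restrict (ball p R)) {a | t ≤ ‖a - p‖ ^ (-s)}) +
        ∫⁻ t in Ioi (1:ℝ), (μ.restrict (ball p R)) {a | t ≤ ‖a - p‖ ^ (-s)} :=
        lintegral_union_le _ _ _
    _ < ⊤ := by
        refine ENNReal.add_lt_top.2 ⟨?_, ?_⟩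
        · calc ∫⁻ t in Ioc (0:ℝ) 1, (μ.restrict (ball p R)) {a | t ≤ ‖a - p‖ ^ (-s)}
              ≤ ∫⁻ _ in Ioc (0:ℝ) 1, μ (ball p R) := by
                refine setLIntegral_mono' measurableSet_Ioc fun t _ => ?_
                exact le_trans (measure_mono (subset_univ _))
                  (le_of_eq (Measure.restrict_apply_univ _))
            _ = μ (ball p R) * volume (Ioc (0:ℝ) 1) := setLIntegral_const _ _
            _ < ⊤ := ENNReal.mul_lt_top measure_ball_lt_top (by simp)
        · have hsub : ∀ t ∈ Ioi (1:ℝ), (μ.restrict (ball p R)) {a | t ≤ ‖a - p‖ ^ (-s)}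
              ≤ ENNReal.ofReal (t ^ ((-s)⁻¹ * Module.finrank ℝ E)) * μ (ball 0 1) := by
            intro t ht
            have ht1 : (1:ℝ) < t := ht
            have ht0 : (0:ℝ) < t := lt_trans one_pos ht1
            have hsub' : {a : E | t ≤ ‖a - p‖ ^ (-s)} ⊆ closedBall p (t ^ (-s)⁻¹) := by
              intro a ha
              simp only [mem_setOf_eq] at ha
              rcases eq_or_ne a p with rfl | hap
              · simp only [sub_self, norm_zero] at ha
                rw [Real.zero_rpow (neg_ne_zero.mpr hs.ne')] at ha
                linarith
              · have hna : 0 < ‖a - p‖ := by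
                  simpa [sub_eq_zero] using norm_pos_iff.2 (sub_ne_zero.2 hap)
                rw [mem_closedBall, dist_eq_norm]
                exact (Real.le_rpow_inv_iff_of_neg hna ht0 (by linarith)).2 ha
            calc (μ.restrict (ball p R)) {a | t ≤ ‖a - p‖ ^ (-s)}
                ≤ μ (closedBall p (t ^ (-s)⁻¹)) :=
                  le_trans (Measure.restrict_apply_le _ _) (measure_mono hsub')
              _ = ENNReal.ofReal ((t ^ (-s)⁻¹) ^ Module.finrank ℝ E) * μ (ball 0 1) :=
                  Measure.addHaar_closedBall μ p (by positivity)
              _ = ENNReal.ofReal (t ^ ((-s)⁻¹ * Module.finrank ℝ E)) * μ (ball 0 1) := by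
                  rw [← Real.rpow_natCast (t ^ (-s)⁻¹) _, ← Real.rpow_mul ht0.le]
          calc ∫⁻ t in Ioi (1:ℝ), (μ.restrict (ball p R)) {a | t ≤ ‖a - p‖ ^ (-s)}
              ≤ ∫⁻ t in Ioi (1:ℝ),
                  ENNReal.ofReal (t ^ ((-s)⁻¹ * Module.finrank ℝ E)) * μ (ball 0 1) :=
                setLIntegral_mono' measurableSet_Ioi hsub
            _ = (∫⁻ t in Ioi (1:ℝ), ENNReal.ofReal (t ^ ((-s)⁻¹ * Module.finrank ℝ E)))
                  * μ (ball 0 1) := lintegral_mul_const' _ _ measure_ball_lt_top.ne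
            _ < ⊤ := by
                refine ENNReal.mul_lt_top ?_ measure_ball_lt_top
                refine IntegrableOn.setLIntegral_lt_top ?_
                refine integrableOn_Ioi_rpow_of_lt ?_ one_pos
                rw [← neg_inv, neg_mul, neg_lt_neg_iff, inv_mul_eq_div, lt_div_iff₀ hs,
                  one_mul]
                exact hsd

/-- Coordinates are bounded by the Euclidean norm. -/
lemma abs_coord_le {ι : Type*} [Fintype ι] [DecidableEq ι]
    (v : EuclideanSpace ℝ ι) (i : ι) : |v i| ≤ ‖v‖ := by
  have h := abs_real_inner_le_norm v (EuclideanSpace.single i (1:ℝ))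
  simpa [EuclideanSpace.inner_single_right] using h

/-- A crude bound for a quadratic form in terms of the sup of the coordinates. -/
lemma abs_dotProduct_mulVec_le {m : Type*} [Fintype m] (M : Matrix m m ℝ) (w : m → ℝ)
    {c : ℝ} (hc0 : 0 ≤ c) (hc : ∀ i, |w i| ≤ c) :
    |dotProduct w (M.mulVec w)| ≤ (∑ i, ∑ j, |M i j|) * c ^ 2 := by
  simp only [dotProduct, Matrix.mulVec]
  refine (Finset.abs_sum_le_sum_abs _ _).trans ?_
  rw [Finset.sum_mul]
  refine Finset.sum_le_sum fun i _ => ?_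
  rw [abs_mul, Finset.sum_mul]
  have h2 : |∑ j, M i j * w j| ≤ ∑ j, |M i j| * c := by
    refine (Finset.abs_sum_le_sum_abs _ _).trans (Finset.sum_le_sum fun j _ => ?_)
    rw [abs_mul]
    exact mul_le_mul_of_nonneg_left (hc j) (abs_nonneg _)
  calc |w i| * |∑ j, M i j * w j| ≤ c * ∑ j, |M i j| * c :=
        mul_le_mul (hc i) h2 (abs_nonneg _) hc0
    _ = ∑ j, |M i j| * c ^ 2 := by
        rw [Finset.mul_sum]
        exact Finset.sum_congr rfl fun j _ => by ring

variable {n : ℕ} {f : EuclideanSpace ℝ (Fin (n + 1)) → ℝ}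
  {Ω : Set (EuclideanSpace ℝ (Fin (n + 1)))}

lemma contOn_hessMat (hΩ : IsOpen Ω) (hf : ContDiffOn ℝ 2 f Ω) :
    ContinuousOn (fun x => hessMat f x) Ω := by
  have h1 : ContinuousOn (iteratedFDeriv ℝ 2 f) Ω := by
    have h2 := hf.continuousOn_iteratedFDerivWithin (m := 2) (by norm_num) hΩ.uniqueDiffOn
    exact h2.congr fun x hx => (iteratedFDerivWithin_of_isOpen (𝕜 := ℝ) (f := f) 2 hΩ hx).symm
  refine continuousOn_pi.2 fun i => continuousOn_pi.2 fun j => ?_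
  exact (ContinuousMultilinearMap.apply ℝ (fun _ : Fin 2 => EuclideanSpace ℝ (Fin (n+1))) ℝ
    ![EuclideanSpace.single i 1, EuclideanSpace.single j 1]).continuous.comp_continuousOn h1

lemma contOn_gradient (hΩ : IsOpen Ω) (hf : ContDiffOn ℝ 2 f Ω) :
    ContinuousOn (gradient f) Ω := by
  have h1 : ContinuousOn (fderiv ℝ f) Ω :=
    hf.continuousOn_fderiv_of_isOpen hΩ (by norm_num)
  exact ((InnerProductSpace.toDual ℝ _).symm.continuous).comp_continuousOn h1

lemma contOn_g (hΩ : IsOpen Ω) (hf : ContDiffOn ℝ 2 f Ω)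
    {U : Set (EuclideanSpace ℝ (Fin (n+1)))}
    (hUΩ : U ⊆ Ω) (hU0 : ∀ x ∈ U, gradient f x ≠ 0) :
    ContinuousOn (fun x => gaussCurv f x * ‖gradient f x‖) U := by
  have hgrad : ContinuousOn (gradient f) U := (contOn_gradient hΩ hf).mono hUΩ
  have hcoord : ∀ i, ContinuousOn (fun x => gradient f x i) U := fun i =>
    ((continuous_apply i).comp
      (PiLp.continuous_ofLp 2 fun _ : Fin (n+1) => ℝ)).comp_continuousOn hgrad
  have hadj : ∀ i j, ContinuousOn (fun x => (hessMat f x).adjugate i j) U := by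
    intro i j
    have h1 : Continuous fun M : Matrix (Fin (n+1)) (Fin (n+1)) ℝ => M.adjugate i j :=
      ((continuous_apply j).comp (continuous_apply i)).comp continuous_id.matrix_adjugate
    exact h1.comp_continuousOn ((contOn_hessMat hΩ hf).mono hUΩ)
  have hQ : ContinuousOn (fun x => hessQstar f x (gradient f x)) U := by
    simp only [hessQstar, dotProduct, Matrix.mulVec]
    refine continuousOn_finset_sum _ fun i _ => (hcoord i).mul ?_
    exact continuousOn_finset_sum _ fun j _ => (hadj i j).mul (hcoord j)
  have hnorm : ContinuousOn (fun x => ‖gradient f x‖) U := hgrad.norm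
  refine ContinuousOn.mul ?_ hnorm
  refine hQ.div (hnorm.pow _) fun x hx => ?_
  exact pow_ne_zero _ (norm_ne_zero_iff.2 (hU0 x hx))

lemma grad_lower_bound (hΩ : IsOpen Ω) (hf : ContDiffOn ℝ 2 f Ω)
    {p : EuclideanSpace ℝ (Fin (n+1))} (hp : p ∈ Ω)
    (hdet : (hessMat f p).det ≠ 0) :
    ∃ c > 0, ∀ᶠ x in 𝓝 p, ‖x - p‖ ≤ c * ‖gradient f x - gradient f p‖ := by
  have hF2 : ContDiffAt ℝ 2 f p := hf.contDiffAt (hΩ.mem_nhds hp)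
  have hF1 : ContDiffAt ℝ 1 (fderiv ℝ f) p := hF2.fderiv_right (by norm_num)
  have hFd : DifferentiableAt ℝ (fderiv ℝ f) p := hF1.differentiableAt (by norm_num)
  set F' := fderiv ℝ (fderiv ℝ f) p with hF'def
  let ψlin : ((EuclideanSpace ℝ (Fin (n+1))) →L[ℝ] ℝ) →ₗ[ℝ] (EuclideanSpace ℝ (Fin (n+1))) :=
    { toFun := fun y => (InnerProductSpace.toDual ℝ (EuclideanSpace ℝ (Fin (n+1)))).symm y
      map_add' := fun y z => by simp
      map_smul' := fun c y => by
        simp only [map_smulₛₗ, starRingEnd_apply, star_trivial, RingHom.id_apply] }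
  set ψ : ((EuclideanSpace ℝ (Fin (n+1))) →L[ℝ] ℝ) →L[ℝ] (EuclideanSpace ℝ (Fin (n+1))) :=
    ψlin.toContinuousLinearMap with hψdef
  have hψy : ∀ y : (EuclideanSpace ℝ (Fin (n+1))) →L[ℝ] ℝ,
      ψ y = (InnerProductSpace.toDual ℝ (EuclideanSpace ℝ (Fin (n+1)))).symm y := fun y => rfl
  have hG : HasFDerivAt (gradient f) (ψ.comp F') p := by
    have h1 := (ψ.hasFDerivAt (x := fderiv ℝ f p)).comp p hFd.hasFDerivAt
    exact h1
  have hψcoord : ∀ (y : (EuclideanSpace ℝ (Fin (n+1))) →L[ℝ] ℝ) (i : Fin (n+1)),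
      ψ y i = y (EuclideanSpace.single i 1) := by
    intro y i
    have h1 : ψ y i = inner (𝕜 := ℝ) (ψ y) (EuclideanSpace.single i (1:ℝ)) := by
      rw [EuclideanSpace.inner_single_right]; simp
    rw [h1, hψy]
    exact InnerProductSpace.toDual_symm_apply
  have hbasis : ∀ v : (EuclideanSpace ℝ (Fin (n+1))),
      v = ∑ j, v j • (EuclideanSpace.single j (1:ℝ)) := by
    intro v
    have h := (EuclideanSpace.basisFun (Fin (n+1)) ℝ).sum_repr v
    simp only [EuclideanSpace.basisFun_apply, EuclideanSpace.basisFun_repr] at h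
    exact h.symm
  have hmul : ∀ v : (EuclideanSpace ℝ (Fin (n+1))),
      (fun i => (ψ.comp F') v i) = (hessMat f p)ᵀ.mulVec (fun j => v j) := by
    intro v
    funext i
    show ψ (F' v) i = _
    rw [hψcoord]
    have hv : F' v (EuclideanSpace.single i 1)
        = ∑ j, v j * (F' (EuclideanSpace.single j 1)) (EuclideanSpace.single i 1) := by
      conv_lhs => rw [hbasis v]
      rw [map_sum, ContinuousLinearMap.sum_apply]
      refine Finset.sum_congr rfl fun j _ => ?_
      rw [_root_.map_smul F' (v j), ContinuousLinearMap.smul_apply, smul_eq_mul]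
    rw [hv, Matrix.mulVec]
    simp only [Matrix.transpose_apply, dotProduct]
    refine Finset.sum_congr rfl fun j _ => ?_
    have hentry : hessMat f p j i
        = (F' (EuclideanSpace.single j 1)) (EuclideanSpace.single i 1) := by
      show iteratedFDeriv ℝ 2 f p ![EuclideanSpace.single j 1, EuclideanSpace.single i 1] = _
      rw [iteratedFDeriv_two_apply]
      simp [Matrix.cons_val_zero, Matrix.cons_val_one, Matrix.head_cons]
      rfl
    rw [hentry, mul_comm]
  have hinj : Function.Injective (ψ.comp F') := by
    intro v w hvw
    have h0 : (ψ.comp F') (v - w) = 0 := by rw [map_sub, hvw, sub_self]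
    have h1 : (hessMat f p)ᵀ.mulVec (fun j => (v - w) j) = 0 := by
      have h2 := hmul (v - w)
      rw [h0] at h2
      simpa [funext_iff] using h2.symm
    have h2 : (fun j => (v - w) j) = 0 :=
      Matrix.eq_zero_of_mulVec_eq_zero (by rwa [Matrix.det_transpose]) h1
    have h3 : v - w = 0 := WithLp.ofLp_injective 2 (funext fun j => congrFun h2 j)
    exact sub_eq_zero.1 h3
  let e := LinearMap.linearEquivOfInjective
    ((ψ.comp F') : (EuclideanSpace ℝ (Fin (n+1))) →ₗ[ℝ] (EuclideanSpace ℝ (Fin (n+1)))) hinj rfl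
  let ec := e.toContinuousLinearEquiv
  have hec : (ec : (EuclideanSpace ℝ (Fin (n+1))) →L[ℝ] (EuclideanSpace ℝ (Fin (n+1))))
      = ψ.comp F' := by
    ext v
    simp [ec, e, LinearMap.linearEquivOfInjective_apply]
  have hG' : HasFDerivAt (gradient f)
      (ec : (EuclideanSpace ℝ (Fin (n+1))) →L[ℝ] (EuclideanSpace ℝ (Fin (n+1)))) p := by
    rw [hec]; exact hG
  have hrev : (fun x => x - p) =O[𝓝 p] fun x => gradient f x - gradient f p :=
    (hG'.isTheta_sub (AntilipschitzWith.isInducing ec.antilipschitz ec.continuous)).isBigO_symm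
  obtain ⟨c, hc, hbig⟩ := hrev.exists_pos
  refine ⟨c, hc, ?_⟩
  rw [Asymptotics.isBigOWith_iff] at hbig
  filter_upwards [hbig] with x hx
  simpa using hx

end Auxiliary

open Metric Real Filter Topology

/-- The function `K·|∇f|` (Gauss–Kronecker curvature of level sets times the gradient norm)
of a Morse function is Lebesgue-integrable on every compact subset of `Ω`. -/
theorem gaussCurv_mul_gradNorm_integrableOn_compact {n : ℕ} (hn : 2 ≤ n)
    (Ω : Set (EuclideanSpace ℝ (Fin (n + 1)))) (hΩ : IsOpen Ω)
    (f : EuclideanSpace ℝ (Fin (n + 1)) → ℝ) (hf : ContDiffOn ℝ 2 f Ω)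
    (hMorse : IsMorseOn f Ω)
    (K : Set (EuclideanSpace ℝ (Fin (n + 1)))) (hK : K ⊆ Ω) (hKc : IsCompact K) :
    IntegrableOn (fun x => gaussCurv f x * ‖gradient f x‖) K volume := by
  set g := fun x => gaussCurv f x * ‖gradient f x‖ with hgdef
  have key : ∀ p : EuclideanSpace ℝ (Fin (n+1)),
      ∃ r : ℝ, 0 < r ∧ (p ∈ K → IntegrableOn g (K ∩ ball p r) volume) := by
    intro p
    by_cases hpK : p ∈ K
    swap
    · exact ⟨1, one_pos, fun h => absurd h hpK⟩
    have hpΩ : p ∈ Ω := hK hpK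
    by_cases hgp : gradient f p = 0
    · -- critical point
      have hdet := hMorse p hpΩ hgp
      obtain ⟨c, hc, hbound⟩ := grad_lower_bound hΩ hf hpΩ hdet
      rw [hgp] at hbound
      simp only [sub_zero] at hbound
      set S := fun x => ∑ i, ∑ j, |(hessMat f x).adjugate i j| with hSdef
      have hScont : ContinuousAt S p := by
        have h1 : ContinuousOn S Ω := by
          refine continuousOn_finset_sum _ fun i _ => continuousOn_finset_sum _ fun j _ => ?_
          refine ContinuousOn.abs ?_
          have hadj : Continuous fun M : Matrix (Fin (n+1)) (Fin (n+1)) ℝ => M.adjugate i j :=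
            ((continuous_apply j).comp (continuous_apply i)).comp continuous_id.matrix_adjugate
          exact hadj.comp_continuousOn (contOn_hessMat hΩ hf)
        exact h1.continuousAt (hΩ.mem_nhds hpΩ)
      have hSev : ∀ᶠ x in 𝓝 p, S x < S p + 1 :=
        hScont.eventually_lt_const (lt_add_one _)
      have hΩev : ∀ᶠ x in 𝓝 p, x ∈ Ω := hΩ.mem_nhds hpΩ
      have hall := hbound.and (hSev.and hΩev)
      rw [Metric.eventually_nhds_iff_ball] at hall
      obtain ⟨r, hr0, hr⟩ := hall
      refine ⟨r, hr0, fun _ => ?_⟩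
      set M := S p + 1 with hMdef
      have hS0 : 0 ≤ S p := Finset.sum_nonneg fun i _ =>
        Finset.sum_nonneg fun j _ => abs_nonneg _
      have hM0 : 0 < M := by linarith
      set s : ℝ := ((n - 1 : ℕ) : ℝ) with hsdef
      have hs0 : 0 < s := by
        rw [hsdef]
        exact_mod_cast (by omega : 0 < n - 1)
      have hsd : s < Module.finrank ℝ (EuclideanSpace ℝ (Fin (n+1))) := by
        rw [hsdef, finrank_euclideanSpace_fin]
        exact_mod_cast (by omega : n - 1 < n + 1)
      have hint : IntegrableOn (fun x => (M * c ^ (n-1)) * ‖x - p‖ ^ (-s))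
          (ball p r) volume :=
        (integrableOn_rpow_dist_ball volume hs0 hsd p r).const_mul _
      set U := ball p r \ {p} with hUdef
      have hUopen : IsOpen U := isOpen_ball.inter isOpen_compl_singleton
      have hUprop : ∀ x ∈ U, x ∈ Ω ∧ 0 < ‖x - p‖ ∧ 0 < ‖gradient f x‖ ∧
          ‖x - p‖ ≤ c * ‖gradient f x‖ ∧ S x < M := by
        intro x hx
        obtain ⟨hx1, hx2⟩ := hx
        obtain ⟨hb, hS, hΩx⟩ := hr x hx1
        have hxp : x ≠ p := hx2
        have hbp : 0 < ‖x - p‖ := norm_pos_iff.2 (sub_ne_zero.2 hxp)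
        have hgpos : 0 < ‖gradient f x‖ := by nlinarith
        exact ⟨hΩx, hbp, hgpos, hb, hS⟩
      have hUg : ∀ x ∈ U, gradient f x ≠ 0 := fun x hx =>
        norm_pos_iff.1 (hUprop x hx).2.2.1
      have hgcont : ContinuousOn g U := contOn_g hΩ hf (fun x hx => (hUprop x hx).1) hUg
      have hmeas : AEStronglyMeasurable g (volume.restrict U) :=
        hgcont.aestronglyMeasurable hUopen.measurableSet
      have hbd : ∀ x ∈ U, ‖g x‖ ≤ (M * c ^ (n-1)) * ‖x - p‖ ^ (-s) := by
        intro x hx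
        obtain ⟨hΩx, hb0, ha0, hab, hSx⟩ := hUprop x hx
        set a := ‖gradient f x‖ with hadef
        set b := ‖x - p‖ with hbdef
        have hQ : |hessQstar f x (gradient f x)| ≤ S x * a ^ 2 := by
          have h := abs_dotProduct_mulVec_le (hessMat f x).adjugate
            (fun i => gradient f x i) (norm_nonneg (gradient f x))
            (fun i => abs_coord_le (gradient f x) i)
          exact h
        have hgx : ‖g x‖ = |hessQstar f x (gradient f x)| * a / a ^ (n+2) := by
          rw [hgdef]
          simp only [gaussCurv]
          rw [Real.norm_eq_abs, abs_mul, abs_div, abs_of_nonneg (norm_nonneg _),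
            abs_of_nonneg (pow_nonneg (norm_nonneg _) _), div_mul_eq_mul_div]
        have hstep1 : ‖g x‖ ≤ M / a ^ (n-1) := by
          rw [hgx]
          have h1 : |hessQstar f x (gradient f x)| * a ≤ (M * a ^ 2) * a := by
            have : S x * a ^ 2 ≤ M * a ^ 2 := by nlinarith
            nlinarith [abs_nonneg (hessQstar f x (gradient f x))]
          have h2 : (M * a ^ 2) * a / a ^ (n+2) = M / a ^ (n-1) := by
            have hne : a ≠ 0 := ne_of_gt ha0
            have hexp : a ^ (n+2) = a ^ 2 * a * a ^ (n-1) := by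
              rw [← pow_succ, ← pow_add]
              congr 1
              omega
            field_simp [hexp]
            rw [← pow_add]
            congr 1
            omega
          rw [← h2]
          gcongr
        have hstep2 : M / a ^ (n-1) ≤ (M * c ^ (n-1)) / b ^ (n-1) := by
          rw [div_le_div_iff₀ (by positivity) (by positivity)]
          have hbc : b ^ (n-1) ≤ (c * a) ^ (n-1) := pow_le_pow_left₀ hb0.le hab _
          rw [mul_pow] at hbc
          calc M * b ^ (n-1) ≤ M * (c ^ (n-1) * a ^ (n-1)) :=
                mul_le_mul_of_nonneg_left hbc hM0.le
            _ = M * c ^ (n-1) * a ^ (n-1) := by ring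
        have hstep3 : (M * c ^ (n-1)) / b ^ (n-1) = (M * c ^ (n-1)) * b ^ (-s) := by
          rw [hsdef, Real.rpow_neg (norm_nonneg _), Real.rpow_natCast, div_eq_mul_inv]
        rw [← hstep3]
        exact hstep1.trans hstep2
      have hIUint : IntegrableOn g U volume := by
        refine Integrable.mono' (hint.mono_set diff_subset) hmeas ?_
        exact (ae_restrict_iff' hUopen.measurableSet).2 (ae_of_all _ hbd)
      have hp0 : IntegrableOn g ({p} : Set (EuclideanSpace ℝ (Fin (n+1)))) volume := by
        rw [IntegrableOn, Measure.restrict_eq_zero.mpr (measure_singleton p)]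
        exact integrable_zero_measure
      have hIball : IntegrableOn g (ball p r) volume := by
        refine (hIUint.union hp0).mono_set fun x hx => ?_
        by_cases hxp : x = p
        · exact Or.inr (by simp [hxp])
        · exact Or.inl ⟨hx, hxp⟩
      exact hIball.mono_set inter_subset_right
    · -- regular point
      have hUopen : IsOpen {x | x ∈ Ω ∧ gradient f x ≠ 0} := by
        have h1 := (contOn_gradient hΩ hf).isOpen_inter_preimage hΩ
          (isOpen_compl_singleton (x := (0 : EuclideanSpace ℝ (Fin (n+1)))))
        convert h1 using 1
        rfl
      have hpU : p ∈ {x | x ∈ Ω ∧ gradient f x ≠ 0} := ⟨hpΩ, hgp⟩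
      obtain ⟨r, hr0, hrsub⟩ := (Metric.nhds_basis_closedBall.mem_iff).1
        (hUopen.mem_nhds hpU)
      have hcont : ContinuousOn g (closedBall p r) :=
        contOn_g hΩ hf (fun x hx => (hrsub hx).1) (fun x hx => (hrsub hx).2)
      have hI : IntegrableOn g (closedBall p r) volume :=
        hcont.integrableOn_compact (isCompact_closedBall p r)
      exact ⟨r, hr0, fun _ => hI.mono_set
        (inter_subset_right.trans ball_subset_closedBall)⟩
  choose r hr0 hri using key
  obtain ⟨t, htK, htcover⟩ := hKc.elim_nhds_subcover (fun x => ball x (r x))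
    (fun x _ => ball_mem_nhds x (hr0 x))
  have hIU : IntegrableOn g (⋃ x ∈ t, K ∩ ball x (r x)) volume :=
    integrableOn_finset_iUnion.2 fun x hx => hri x (htK x hx)
  refine hIU.mono_set fun y hy => ?_
  obtain ⟨x, hxt, hyx⟩ := mem_iUnion₂.1 (htcover hy)
  exact mem_iUnion₂.2 ⟨x, hxt, hy, hyx⟩
end
end
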